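/- arXiv:2305.15656 — 3 statements merged into one kernel-verified Lean document; each statement's English description precedes it below -/
import Mathlib

section
/- Let A be an abelian category and F : A → A a right exact additive endofunctor. Then the right trivial extension category A ⋉ F, whose objects are pairs (X, f) with f : F(X) → X satisfying f ∘ F(f) = 0 and whose morphisms (X, α) → (Y, β) are morphisms γ : X → Y with γ ∘ α = β ∘ F(γ), is an abelian category. -/
open CategoryTheory

variable (A : Type u) [Category.{v} A] [Abelian A] (F : A ⥤ A)

/-- The right trivial extension `A ⋉ F`: objects are pairs `(X, f : F(X) ⟶ X)` with
`f ∘ F(f) = 0`. -/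
structure RightTrivExt where
  X : A
  f : F.obj X ⟶ X
  cond : F.map f ≫ f = 0

instance : Category (RightTrivExt A F) where
  Hom P Q := {γ : P.X ⟶ Q.X // F.map γ ≫ Q.f = P.f ≫ γ}
  id P := ⟨𝟙 P.X, by simp⟩
  comp {P Q S} φ ψ := ⟨φ.1 ≫ ψ.1, by
    rw [F.map_comp, Category.assoc, ψ.2, ← Category.assoc, φ.2, Category.assoc]⟩
  id_comp φ := Subtype.ext (Category.id_comp _)
  comp_id φ := Subtype.ext (Category.comp_id _)
  assoc φ ψ χ := Subtype.ext (Category.assoc _ _ _)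

/-!
The forgetful functor `A ⋉ F ⥤ A` is faithful, and a map of `A` factoring a morphism of `A ⋉ F`
through a mono (dually: through a map that `F` sends to an epi) automatically commutes with the
structure maps. Hence a (co)kernel (co)fork in `A ⋉ F` is a (co)limit once its underlying one is
in `A`. The kernel of `φ.1` inherits a structure map by restriction; the cokernel gets one because
`F`, being right exact, sends `cokernel.π φ.1` to a cokernel of `F.map φ.1`. So monos and epis of
`A ⋉ F` are monos and epis of `A`, where they are normal, and their normality lifts.
-/

namespace RightTrivExt

open CategoryTheory.Limits ZeroObject

variable {A F}

@[ext]
lemma hom_ext {P Q : RightTrivExt A F} {φ ψ : P ⟶ Q} (h : φ.1 = ψ.1) : φ = ψ :=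
  Subtype.ext h

lemma comm_of_comp_mono {K P W : RightTrivExt A F} (ι : K ⟶ P) [Mono ι.1] (ψ : W ⟶ P)
    {l : W.X ⟶ K.X} (hl : l ≫ ι.1 = ψ.1) : F.map l ≫ K.f = W.f ≫ l := by
  rw [← cancel_mono ι.1, Category.assoc, ← ι.2, ← Category.assoc, ← F.map_comp, hl, ψ.2,
    Category.assoc, hl]

lemma comm_of_epi_comp {P Q Z : RightTrivExt A F} (π : P ⟶ Q) [Epi (F.map π.1)] (ψ : P ⟶ Z)
    {d : Q.X ⟶ Z.X} (hd : π.1 ≫ d = ψ.1) : F.map d ≫ Z.f = Q.f ≫ d := by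
  rw [← cancel_epi (F.map π.1), ← Category.assoc, ← F.map_comp, hd, ψ.2, ← Category.assoc,
    π.2, Category.assoc, hd]

section Additive

variable [F.Additive]

def homAddSubgroup (P Q : RightTrivExt A F) : AddSubgroup (P.X ⟶ Q.X) where
  carrier := {γ | F.map γ ≫ Q.f = P.f ≫ γ}
  add_mem' {γ δ} hγ hδ := by
    simp only [Set.mem_ofPred_eq, F.map_add, Preadditive.add_comp, Preadditive.comp_add] at *
    rw [hγ, hδ]
  zero_mem' := by simp
  neg_mem' {γ} hγ := by
    simp only [Set.mem_ofPred_eq, F.map_neg, Preadditive.neg_comp, Preadditive.comp_neg] at *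
    rw [hγ]

instance (P Q : RightTrivExt A F) : AddCommGroup (P ⟶ Q) :=
  inferInstanceAs (AddCommGroup (homAddSubgroup P Q))

instance : Preadditive (RightTrivExt A F) where
  add_comp _ _ _ _ _ _ := hom_ext (Preadditive.add_comp _ _ _ _ _ _)
  comp_add _ _ _ _ _ _ := hom_ext (Preadditive.comp_add _ _ _ _ _ _)

instance : HasZeroObject (RightTrivExt A F) :=
  ⟨⟨⟨0, 0, by simp⟩,
    fun _ => ⟨⟨⟨0, by simp⟩⟩, fun _ => hom_ext ((isZero_zero A).eq_of_src _ _)⟩,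
    fun _ => ⟨⟨⟨0, by simp⟩⟩, fun _ => hom_ext ((isZero_zero A).eq_of_tgt _ _)⟩⟩⟩

section Prod

variable (P Q : RightTrivExt A F)

noncomputable abbrev prod : RightTrivExt A F where
  X := P.X ⊞ Q.X
  f := biprod.lift (F.map biprod.fst ≫ P.f) (F.map biprod.snd ≫ Q.f)
  cond := by
    ext
    · rw [Category.assoc, biprod.lift_fst, ← F.map_comp_assoc, biprod.lift_fst, F.map_comp,
        Category.assoc, P.cond, comp_zero, zero_comp]
    · rw [Category.assoc, biprod.lift_snd, ← F.map_comp_assoc, biprod.lift_snd, F.map_comp,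
        Category.assoc, Q.cond, comp_zero, zero_comp]

noncomputable def prodFst : prod P Q ⟶ P := ⟨biprod.fst, (biprod.lift_fst _ _).symm⟩

noncomputable def prodSnd : prod P Q ⟶ Q := ⟨biprod.snd, (biprod.lift_snd _ _).symm⟩

noncomputable def prodLift {Z : RightTrivExt A F} (ψ₁ : Z ⟶ P) (ψ₂ : Z ⟶ Q) :
    Z ⟶ prod P Q :=
  ⟨biprod.lift ψ₁.1 ψ₂.1, by
    apply biprod.hom_ext
    · rw [Category.assoc, biprod.lift_fst, ← F.map_comp_assoc, biprod.lift_fst, ψ₁.2,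
        Category.assoc, biprod.lift_fst]
    · rw [Category.assoc, biprod.lift_snd, ← F.map_comp_assoc, biprod.lift_snd, ψ₂.2,
        Category.assoc, biprod.lift_snd]⟩

noncomputable def prodIsLimit : IsLimit (BinaryFan.mk (prodFst P Q) (prodSnd P Q)) :=
  BinaryFan.isLimitMk (fun s => prodLift P Q s.fst s.snd)
    (fun _ => hom_ext (biprod.lift_fst _ _))
    (fun _ => hom_ext (biprod.lift_snd _ _))
    (fun _ _ h₁ h₂ => hom_ext (biprod.hom_ext _ _
      ((congrArg Subtype.val h₁).trans (biprod.lift_fst _ _).symm)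
      ((congrArg Subtype.val h₂).trans (biprod.lift_snd _ _).symm)))

instance : HasBinaryProducts (RightTrivExt A F) :=
  have {P Q : RightTrivExt A F} : HasLimit (pair P Q) := ⟨⟨⟨_, prodIsLimit P Q⟩⟩⟩
  hasBinaryProducts_of_hasLimit_pair _

instance : HasFiniteProducts (RightTrivExt A F) :=
  hasFiniteProducts_of_has_binary_and_terminal

end Prod

variable {P Q : RightTrivExt A F}

lemma val_comp_eq_zero {R : RightTrivExt A F} {φ : P ⟶ Q} {ψ : Q ⟶ R} (h : φ ≫ ψ = 0) :
    φ.1 ≫ ψ.1 = 0 :=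
  congrArg Subtype.val h

def isLimitOfIsLimitVal {K : RightTrivExt A F} {φ : P ⟶ Q} (ι : K ⟶ P) (w : ι ≫ φ = 0)
    (h : IsLimit (KernelFork.ofι ι.1 (val_comp_eq_zero w))) : IsLimit (KernelFork.ofι ι w) :=
  have : Mono ι.1 := mono_of_isLimit_fork h
  let lift {W : RightTrivExt A F} (ψ : W ⟶ P) (hψ : ψ ≫ φ = 0) :=
    KernelFork.IsLimit.lift' h ψ.1 (val_comp_eq_zero hψ)
  KernelFork.IsLimit.ofι _ _
    (fun ψ hψ => ⟨(lift ψ hψ).1, comm_of_comp_mono ι ψ (lift ψ hψ).2⟩)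
    (fun ψ hψ => hom_ext (lift ψ hψ).2)
    (fun ψ hψ _ hm =>
      hom_ext ((cancel_mono ι.1).1 ((congrArg Subtype.val hm).trans (lift ψ hψ).2.symm)))

def isColimitOfIsColimitVal [F.PreservesEpimorphisms] {C : RightTrivExt A F} {φ : P ⟶ Q}
    (π : Q ⟶ C) (w : φ ≫ π = 0)
    (h : IsColimit (CokernelCofork.ofπ π.1 (val_comp_eq_zero w))) : IsColimit (CokernelCofork.ofπ π w) :=
  have : Epi π.1 := epi_of_isColimit_cofork h
  let desc {Z : RightTrivExt A F} (ψ : Q ⟶ Z) (hψ : φ ≫ ψ = 0) :=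
    CokernelCofork.IsColimit.desc' h ψ.1 (val_comp_eq_zero hψ)
  CokernelCofork.IsColimit.ofπ _ _
    (fun ψ hψ => ⟨(desc ψ hψ).1, comm_of_epi_comp π ψ (desc ψ hψ).2⟩)
    (fun ψ hψ => hom_ext (desc ψ hψ).2)
    (fun ψ hψ _ hm =>
      hom_ext ((cancel_epi π.1).1 ((congrArg Subtype.val hm).trans (desc ψ hψ).2.symm)))

variable (φ : P ⟶ Q)

noncomputable abbrev kernelObj : RightTrivExt A F where
  X := kernel φ.1
  f := kernel.lift φ.1 (F.map (kernel.ι φ.1) ≫ P.f) (by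
    rw [Category.assoc, ← φ.2, ← F.map_comp_assoc, kernel.condition, F.map_zero, zero_comp])
  cond := by
    rw [← cancel_mono (kernel.ι φ.1), Category.assoc, kernel.lift_ι, ← F.map_comp_assoc,
      kernel.lift_ι, F.map_comp, Category.assoc, P.cond, comp_zero, zero_comp]

noncomputable def kernelι : kernelObj φ ⟶ P :=
  ⟨kernel.ι φ.1, (kernel.lift_ι _ _ _).symm⟩

lemma kernelι_comp : kernelι φ ≫ φ = 0 :=
  hom_ext (kernel.condition φ.1)

noncomputable def kernelIsLimit : IsLimit (KernelFork.ofι (kernelι φ) (kernelι_comp φ)) :=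
  isLimitOfIsLimitVal _ _ (kernelIsKernel φ.1)

instance : HasKernels (RightTrivExt A F) where
  has_limit φ := ⟨⟨⟨_, kernelIsLimit φ⟩⟩⟩

lemma mono_val [Mono φ] : Mono φ.1 :=
  Abelian.mono_of_kernel_ι_eq_zero _
    (congrArg Subtype.val (zero_of_comp_mono φ (kernelι_comp φ) : kernelι φ = 0))

end Additive

section RightExact

variable [F.Additive] [PreservesFiniteColimits F] {P Q : RightTrivExt A F} (φ : P ⟶ Q)

noncomputable def cokernelStructureMap :
    {f : F.obj (cokernel φ.1) ⟶ cokernel φ.1 //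
      F.map (cokernel.π φ.1) ≫ f = Q.f ≫ cokernel.π φ.1} :=
  Cofork.IsColimit.desc' (isColimitOfHasCokernelOfPreservesColimit F φ.1)
    (Q.f ≫ cokernel.π φ.1)
    (by rw [← Category.assoc, φ.2, Category.assoc, cokernel.condition, comp_zero, zero_comp])

noncomputable abbrev cokernelObj : RightTrivExt A F where
  X := cokernel φ.1
  f := (cokernelStructureMap φ).1
  cond := by
    rw [← cancel_epi (F.map (F.map (cokernel.π φ.1))), ← F.map_comp_assoc,
      (cokernelStructureMap φ).2, F.map_comp, Category.assoc, (cokernelStructureMap φ).2,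
      ← Category.assoc, Q.cond, zero_comp, comp_zero]

noncomputable def cokernelπ : Q ⟶ cokernelObj φ :=
  ⟨cokernel.π φ.1, (cokernelStructureMap φ).2⟩

lemma comp_cokernelπ : φ ≫ cokernelπ φ = 0 :=
  hom_ext (cokernel.condition φ.1)

noncomputable def cokernelIsColimit :
    IsColimit (CokernelCofork.ofπ (cokernelπ φ) (comp_cokernelπ φ)) :=
  isColimitOfIsColimitVal _ _ (cokernelIsCokernel φ.1)

instance : HasCokernels (RightTrivExt A F) where
  has_colimit φ := ⟨⟨⟨_, cokernelIsColimit φ⟩⟩⟩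

lemma epi_val [Epi φ] : Epi φ.1 :=
  Abelian.epi_of_cokernel_π_eq_zero _
    (congrArg Subtype.val (zero_of_epi_comp φ (comp_cokernelπ φ) : cokernelπ φ = 0))

noncomputable instance : IsNormalMonoCategory (RightTrivExt A F) where
  normalMonoOfMono φ _ :=
    have := mono_val φ
    ⟨⟨_, cokernelπ φ, comp_cokernelπ φ, isLimitOfIsLimitVal _ _
      (Abelian.monoIsKernelOfCokernel (CokernelCofork.ofπ _ (cokernel.condition φ.1))
        (cokernelIsCokernel φ.1))⟩⟩

noncomputable instance : IsNormalEpiCategory (RightTrivExt A F) where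
  normalEpiOfEpi φ _ :=
    have := epi_val φ
    ⟨⟨_, kernelι φ, kernelι_comp φ, isColimitOfIsColimitVal _ _
      (Abelian.epiIsCokernelOfKernel (KernelFork.ofι _ (kernel.condition φ.1))
        (kernelIsKernel φ.1))⟩⟩

end RightExact

end RightTrivExt

/-- If `A` is abelian and `F : A ⥤ A` is a right exact additive endofunctor, then the right
trivial extension category `A ⋉ F` is abelian. -/
theorem stmt_2 [F.Additive] [Limits.PreservesFiniteColimits F] :
    Nonempty (Abelian (RightTrivExt A F)) :=
  ⟨{}⟩
end

section
/- Let R be a ring with M = R as an R-R-bimodule, and let [Y, β] be a left R ⋉ R-module, i.e. an R-module Y with an endomorphism β satisfying β² = 0. If the sequence Y →β Y →β Y is exact and ker(β) is a Gorenstein injective left R-module, then [Y, β] is a Gorenstein injective left R ⋉ R-module. -/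
open TensorProduct

/-- A complete projective resolution: an exact complex of projective `S`-modules
that stays exact under `Hom_S(-, Q)` for every projective `Q`. -/
structure IsCompleteProjectiveResolution (S : Type) [Ring S]
    (C : CochainComplex (ModuleCat.{0} S) ℤ) : Prop where
  projective : ∀ n : ℤ, Module.Projective S (C.X n)
  exact : ∀ n : ℤ, Function.Exact ⇑(C.d (n-1) n) ⇑(C.d n (n+1))
  homExact : ∀ (Q : ModuleCat.{0} S), Module.Projective S Q → ∀ (n : ℤ) (g : C.X n ⟶ Q),
    (g.hom : C.X n →ₗ[S] Q).comp (C.d (n-1) n).hom = 0 →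
      ∃ h : C.X (n+1) →ₗ[S] Q, h.comp (C.d n (n+1)).hom = g.hom

/-- Gorenstein projective module: a kernel of a differential in a complete
projective resolution. -/
def IsGorensteinProjective (S : Type) [Ring S] (G : Type) [AddCommGroup G]
    [Module S G] : Prop :=
  ∃ C : CochainComplex (ModuleCat.{0} S) ℤ, IsCompleteProjectiveResolution S C ∧
    Nonempty (G ≃ₗ[S] LinearMap.ker (C.d 0 1).hom)

structure IsCompleteInjectiveResolution (S : Type) [Ring S]
    (C : CochainComplex (ModuleCat.{0} S) ℤ) : Prop where
  injective : ∀ n : ℤ, Module.Injective S (C.X n)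
  exact : ∀ n : ℤ, Function.Exact ⇑(C.d (n-1) n) ⇑(C.d n (n+1))
  homExact : ∀ (Q : ModuleCat.{0} S), Module.Injective S Q → ∀ (n : ℤ) (g : Q →ₗ[S] C.X n),
    ((C.d n (n+1)).hom : C.X n →ₗ[S] C.X (n+1)).comp g = 0 →
      ∃ h : Q →ₗ[S] C.X (n-1), ((C.d (n-1) n).hom : C.X (n-1) →ₗ[S] C.X n).comp h = g

def IsGorensteinInjective (S : Type) [Ring S] (G : Type) [AddCommGroup G]
    [Module S G] : Prop :=
  ∃ C : CochainComplex (ModuleCat.{0} S) ℤ, IsCompleteInjectiveResolution S C ∧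
    Nonempty (G ≃ₗ[S] LinearMap.ker (C.d 0 1).hom)

/-- The `R ⋉ R`-module structure corresponding to an `R`-module `X` with an endomorphism
`α` satisfying `α² = 0`. -/
def epsModule {R X : Type} [Ring R] [AddCommGroup X] [Module R X]
    (α : X →ₗ[R] X) (hα : α ∘ₗ α = 0) : Module (TrivSqZeroExt R R) X where
  smul a x := a.fst • x + a.snd • α x
  one_smul x := by
    show (1 : TrivSqZeroExt R R).fst • x + (1 : TrivSqZeroExt R R).snd • α x = x
    simp
  mul_smul a b x := by
    show (a * b).fst • x + (a * b).snd • α x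
      = a.fst • (b.fst • x + b.snd • α x) + a.snd • α (b.fst • x + b.snd • α x)
    have h0 : α (α x) = 0 := by
      have := congrArg (fun f => f x) hα; simpa using this
    simp only [TrivSqZeroExt.fst_mul, TrivSqZeroExt.snd_mul, map_add, map_smul, h0,
      smul_zero, add_zero, smul_add, smul_smul, MulOpposite.smul_eq_mul_unop,
      MulOpposite.unop_op, add_smul, smul_eq_mul]
    abel
  smul_zero a := by
    show a.fst • (0 : X) + a.snd • α 0 = 0
    simp
  smul_add a x y := by
    show a.fst • (x + y) + a.snd • α (x + y)
      = (a.fst • x + a.snd • α x) + (a.fst • y + a.snd • α y)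
    rw [map_add, smul_add, smul_add]
    abel
  add_smul a b x := by
    show (a + b).fst • x + (a + b).snd • α x
      = (a.fst • x + a.snd • α x) + (b.fst • x + b.snd • α x)
    rw [TrivSqZeroExt.fst_add, TrivSqZeroExt.snd_add, add_smul, add_smul]
    abel
  zero_smul x := by
    show (0 : TrivSqZeroExt R R).fst • x + (0 : TrivSqZeroExt R R).snd • α x = 0
    simp

/-!
Take a complete injective resolution `C` of `K := ker β`, so that `K ≅ ker d⁰`. Because
`0 → K → Y →β K → 0` is exact, `Y` should be resolved by an extension of `C` by `C`: put
`Tⁿ = Hom_R(R ⋉ R, Cⁿ) ≅ Cⁿ × Cⁿ`, injective over `R ⋉ R`, with differential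
`(a, b) ↦ (d a + σ b, d b)`, where `σ : Cⁿ → Cⁿ⁺¹` anticommutes with `d`. The map `σ⁰` is chosen
to encode the extension, and then extended degree by degree in both directions using injectivity
and `Hom`-exactness of `C`. If `f : Y → C⁰` extends `K ≅ ker d⁰`, then `y ↦ (f y, f (β y))`
identifies `Y` with `ker (T⁰ → T¹)`.

By adjunction, `Hom_{R⋉R}(Q, T)` is `Hom_R(Q, C)` with differential `ψ ↦ d ψ + σ ψ ε`. For an
injective `R ⋉ R`-module `Q`, the kernel of `ε` on `Q` is an injective `R`-module equal to its
image, which is what makes this complex exact.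
-/

universe w

theorem Module.Injective.exists_comp_eq_of_ker_le {R A B : Type*} {Q : Type w} [Ring R]
    [AddCommGroup A] [Module R A] [AddCommGroup B] [Module R B] [AddCommGroup Q] [Module R Q]
    [Small.{w} R] [Module.Injective R Q] (f : A →ₗ[R] B) (g : A →ₗ[R] Q)
    (h : LinearMap.ker f ≤ LinearMap.ker g) : ∃ g' : B →ₗ[R] Q, g' ∘ₗ f = g := by
  obtain ⟨g', hg'⟩ := Module.Injective.extension_property R Q _ _
    ((LinearMap.ker f).liftQ f le_rfl)
    (by rw [← LinearMap.ker_eq_bot, Submodule.ker_liftQ_eq_bot _ _ _ le_rfl])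
    ((LinearMap.ker f).liftQ g h)
  exact ⟨g', LinearMap.ext fun a => LinearMap.congr_fun hg' (Submodule.Quotient.mk a)⟩

theorem Int.exists_seq_of_step {P : ℤ → Type*} (Rel : ∀ n, P n → P (n + 1) → Prop)
    (Inv : ∀ n, P n → Prop) (x₀ : P 0) (h₀ : Inv 0 x₀)
    (up : ∀ n x, Inv n x → ∃ y, Rel n x y ∧ Inv (n + 1) y)
    (down : ∀ n y, Inv (n + 1) y → ∃ x, Rel n x y ∧ Inv n x) :
    ∃ x : ∀ n, P n, x 0 = x₀ ∧ ∀ n, Rel n (x n) (x (n + 1)) := by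
  choose u hu using up
  choose d hd using down
  let U (t : ℕ) : {x : P t // Inv t x} :=
    Nat.rec ⟨x₀, h₀⟩ (fun t y => ⟨u t y.1 y.2, (hu t y.1 y.2).2⟩) t
  let D (t : ℕ) : {x : P (Int.negSucc t) // Inv _ x} :=
    Nat.rec (motive := fun t => {x : P (Int.negSucc t) // Inv _ x})
      ⟨d (Int.negSucc 0) x₀ h₀, (hd (Int.negSucc 0) x₀ h₀).2⟩
      (fun t y => ⟨d (Int.negSucc (t + 1)) y.1 y.2, (hd (Int.negSucc (t + 1)) y.1 y.2).2⟩) t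
  refine ⟨fun n => Int.rec (motive := P) (fun t => (U t).1) (fun t => (D t).1) n, rfl, ?_⟩
  rintro (t | _ | t)
  · exact (hu t _ _).1
  · exact (hd (Int.negSucc 0) x₀ h₀).1
  · exact (hd _ _ _).1

section Extension

variable {R : Type} [Ring R] {Y E₀ E₁ : Type} [AddCommGroup Y] [Module R Y] [AddCommGroup E₀]
  [Module R E₀] [AddCommGroup E₁] [Module R E₁] {β : Y →ₗ[R] Y} {d : E₀ →ₗ[R] E₁}
  (e : LinearMap.ker β ≃ₗ[R] LinearMap.ker d) {f : Y →ₗ[R] E₀}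
  (hfe : ∀ k : LinearMap.ker β, f k = e k)
include hfe

theorem eq_zero_of_extends_of_eq_zero (hβ : β ∘ₗ β = 0) {y : Y} (h₀ : f y = 0)
    (h₁ : f (β y) = 0) : y = 0 := by
  have hβy : β y ∈ LinearMap.ker β := LinearMap.congr_fun hβ y
  have hy : y ∈ LinearMap.ker β := by
    have := hfe ⟨β y, hβy⟩
    rw [h₁, eq_comm, ZeroMemClass.coe_eq_zero, LinearEquiv.map_eq_zero_iff] at this
    exact congrArg Subtype.val this
  have := hfe ⟨y, hy⟩
  rw [h₀, eq_comm, ZeroMemClass.coe_eq_zero, LinearEquiv.map_eq_zero_iff] at this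
  exact congrArg Subtype.val this

theorem exists_apply_eq_of_extends (hex : LinearMap.range β = LinearMap.ker β) {x : E₀}
    (hx : d x = 0) : ∃ y, f (β y) = x := by
  obtain ⟨y, hy⟩ : (e.symm ⟨x, hx⟩ : Y) ∈ LinearMap.range β := hex.symm ▸ (e.symm ⟨x, hx⟩).2
  refine ⟨y, ?_⟩
  rw [hy, hfe, LinearEquiv.apply_symm_apply]

theorem exists_sigma_zero_of_extends {E₂ : Type} [AddCommGroup E₂] [Module R E₂]
    [Module.Injective R E₁] (hβ : β ∘ₗ β = 0) (hex : LinearMap.range β = LinearMap.ker β)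
    (d' : E₁ →ₗ[R] E₂) (hd : d' ∘ₗ d = 0) :
    ∃ σ₀ : E₀ →ₗ[R] E₁, σ₀ ∘ₗ f ∘ₗ β = -(d ∘ₗ f) ∧ ∀ x, d x = 0 → d' (σ₀ x) = 0 := by
  obtain ⟨σ₀, hσ₀⟩ := Module.Injective.exists_comp_eq_of_ker_le (f ∘ₗ β) (-(d ∘ₗ f)) fun y hy => by
    have hβy : β y = 0 := eq_zero_of_extends_of_eq_zero e hfe hβ hy <| by
      rw [← LinearMap.comp_apply β β, hβ, LinearMap.zero_apply, map_zero]
    rw [LinearMap.mem_ker, LinearMap.neg_apply, neg_eq_zero, LinearMap.comp_apply, hfe ⟨y, hβy⟩]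
    exact (e _).2
  refine ⟨σ₀, hσ₀, fun x hx => ?_⟩
  obtain ⟨y, rfl⟩ := exists_apply_eq_of_extends e hfe hex hx
  have hσy : σ₀ (f (β y)) = -d (f y) := LinearMap.congr_fun hσ₀ y
  rw [hσy, map_neg, ← LinearMap.comp_apply d' d, hd, LinearMap.zero_apply, neg_zero]

theorem exists_eq_of_extends (hex : LinearMap.range β = LinearMap.ker β) {σ₀ : E₀ →ₗ[R] E₁}
    (hσ₀ : σ₀ ∘ₗ f ∘ₗ β = -(d ∘ₗ f)) {x₀ x₁ : E₀} (h₀ : d x₀ + σ₀ x₁ = 0) (h₁ : d x₁ = 0) :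
    ∃ y, f y = x₀ ∧ f (β y) = x₁ := by
  obtain ⟨y₀, rfl⟩ := exists_apply_eq_of_extends e hfe hex h₁
  have hσy : σ₀ (f (β y₀)) = -d (f y₀) := LinearMap.congr_fun hσ₀ y₀
  have hk : d (x₀ - f y₀) = 0 := by
    rw [map_sub, eq_neg_of_add_eq_zero_left h₀, hσy, neg_neg, sub_self]
  refine ⟨y₀ + e.symm ⟨_, hk⟩, ?_, ?_⟩
  · rw [map_add, hfe, LinearEquiv.apply_symm_apply, add_sub_cancel]
  · rw [map_add, LinearMap.mem_ker.mp (e.symm _).2, add_zero]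

end Extension

section SquareZero

variable {R : Type} [Ring R]

local notation "S" => TrivSqZeroExt R R
local notation "ε" => (TrivSqZeroExt.inr 1 : TrivSqZeroExt R R)

theorem inl_mul_eps_comm (r : R) : TrivSqZeroExt.inl r * ε = ε * TrivSqZeroExt.inl r := by
  ext <;> simp

theorem eps_mul_eq_inr_fst (s : S) : ε * s = TrivSqZeroExt.inr s.fst := by
  ext <;> simp

section EpsModule

variable {X : Type} [AddCommGroup X] [Module R X] (α : X →ₗ[R] X) (hα : α ∘ₗ α = 0)

theorem epsModule_smul (s : S) (x : X) :
    (letI := epsModule α hα; s • x) = s.fst • x + s.snd • α x := rfl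

theorem epsModule_isScalarTower :
    letI := epsModule α hα
    IsScalarTower R S X := by
  let _ := epsModule α hα
  refine ⟨fun r s x => ?_⟩
  simp only [epsModule_smul, TrivSqZeroExt.fst_smul, TrivSqZeroExt.snd_smul, smul_eq_mul,
    mul_smul, smul_add]

theorem epsModule_eps_smul (x : X) : (letI := epsModule α hα; ε • x) = α x := by
  simp [epsModule_smul]

end EpsModule

section Compatible

variable {Q : Type} [AddCommGroup Q] [Module (TrivSqZeroExt R R) Q] [Module R Q]
  [IsScalarTower R (TrivSqZeroExt R R) Q]

theorem inl_smul (r : R) (q : Q) : (TrivSqZeroExt.inl r : S) • q = r • q := by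
  rw [← smul_one_smul S r q, ← TrivSqZeroExt.inl_mul_eq_smul, mul_one]

variable (R Q) in
def epsSMul : Q →ₗ[R] Q where
  toFun q := ε • q
  map_add' := smul_add ε
  map_smul' r q := by
    rw [RingHom.id_apply, ← inl_smul (R := R) r q, ← inl_smul (R := R) r, smul_smul, smul_smul,
      inl_mul_eps_comm]

theorem epsSMul_apply (q : Q) : epsSMul R Q q = ε • q := rfl

theorem epsSMul_comp_epsSMul : epsSMul R Q ∘ₗ epsSMul R Q = 0 := by
  ext q
  simp [epsSMul_apply, smul_smul]

theorem smul_eq_fst_smul_add_snd_smul (s : S) (q : Q) : s • q = s.fst • q + s.snd • ε • q := by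
  rw [← inl_smul (R := R) s.fst, ← inl_smul (R := R) s.snd, smul_smul, ← add_smul,
    TrivSqZeroExt.inl_mul_inr, smul_eq_mul, mul_one, TrivSqZeroExt.inl_fst_add_inr_snd_eq]

theorem eps_smul_smul (s : S) (q : Q) : ε • s • q = s.fst • ε • q := by
  rw [smul_smul, eps_mul_eq_inr_fst, ← inl_smul (R := R) s.fst, smul_smul,
    TrivSqZeroExt.inl_mul_inr, smul_eq_mul, mul_one]

theorem epsSMul_comp_restrictScalars {P : Type} [AddCommGroup P] [Module (TrivSqZeroExt R R) P]
    [Module R P] [IsScalarTower R (TrivSqZeroExt R R) P] (H : P →ₗ[S] Q) :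
    epsSMul R Q ∘ₗ H.restrictScalars R = H.restrictScalars R ∘ₗ epsSMul R P := by
  ext p
  simp [epsSMul_apply]

end Compatible

end SquareZero

section Coind

variable {R : Type} [Ring R]

local notation "S" => TrivSqZeroExt R R
local notation "ε" => (TrivSqZeroExt.inr 1 : TrivSqZeroExt R R)

theorem compHom_inlHom_isScalarTower (A : Type) [AddCommGroup A] [Module S A] :
    letI := Module.compHom A (TrivSqZeroExt.inlHom R R)
    IsScalarTower R S A :=
  letI := Module.compHom A (TrivSqZeroExt.inlHom R R)
  ⟨fun r s a => by
    change (r • s) • a = (TrivSqZeroExt.inl r : S) • s • a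
    rw [← TrivSqZeroExt.inl_mul_eq_smul, mul_smul]⟩

/-- The coinduced module `Hom_R(R ⋉ R, E)`, realised as `E × E` with `ε` acting by
`(a, b) ↦ (b, 0)`. -/
def Coind (E : Type) : Type := E × E

namespace Coind

variable {E : Type}

def mk (a b : E) : Coind E := (a, b)

@[simp] theorem mk_fst (a b : E) : (mk a b).1 = a := rfl

@[simp] theorem mk_snd (a b : E) : (mk a b).2 = b := rfl

@[ext] theorem ext {x y : Coind E} (h₁ : x.1 = y.1) (h₂ : x.2 = y.2) : x = y := Prod.ext h₁ h₂

variable [AddCommGroup E] [Module R E]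

instance : AddCommGroup (Coind E) := inferInstanceAs (AddCommGroup (E × E))

instance : Module R (Coind E) := inferInstanceAs (Module R (E × E))

variable (R E) in
def shift : Coind E →ₗ[R] Coind E where
  toFun x := ((x.2, 0) : E × E)
  map_add' _ _ := Prod.ext rfl (add_zero 0).symm
  map_smul' r _ := Prod.ext rfl (smul_zero r).symm

theorem shift_comp_shift : shift R E ∘ₗ shift R E = 0 := rfl

instance : Module S (Coind E) := epsModule (shift R E) shift_comp_shift

instance : IsScalarTower R S (Coind E) := epsModule_isScalarTower _ _

@[simp] theorem add_fst (x y : Coind E) : (x + y).1 = x.1 + y.1 := rfl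

@[simp] theorem add_snd (x y : Coind E) : (x + y).2 = x.2 + y.2 := rfl

@[simp] theorem smul_fst (s : S) (x : Coind E) : (s • x).1 = s.fst • x.1 + s.snd • x.2 := rfl

@[simp] theorem smul_snd (s : S) (x : Coind E) : (s • x).2 = s.fst • x.2 :=
  (congrArg _ (smul_zero s.snd)).trans (add_zero _)

variable (R E) in
def fst : Coind E →ₗ[R] E := LinearMap.fst R E E

@[simp] theorem fst_apply (x : Coind E) : fst R E x = x.1 := rfl

end Coind

variable {Q : Type} [AddCommGroup Q] [Module (TrivSqZeroExt R R) Q] [Module R Q]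
  [IsScalarTower R (TrivSqZeroExt R R) Q]
  {E : Type} [AddCommGroup E] [Module R E]

def coindLift (ψ : Q →ₗ[R] E) : Q →ₗ[S] Coind E where
  toFun q := Coind.mk (ψ q) (ψ (ε • q))
  map_add' a b := by ext <;> simp
  map_smul' s q := by
    ext
    · simp [smul_eq_fst_smul_add_snd_smul (R := R) s q]
    · simp only [Coind.mk_snd, Coind.smul_snd, RingHom.id_apply]
      rw [eps_smul_smul (R := R), map_smul]

theorem coindLift_apply (ψ : Q →ₗ[R] E) (q : Q) :
    coindLift ψ q = Coind.mk (ψ q) (ψ (ε • q)) := rfl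

theorem fst_comp_coindLift (ψ : Q →ₗ[R] E) :
    Coind.fst R E ∘ₗ (coindLift ψ).restrictScalars R = ψ := rfl

theorem coindLift_zero : coindLift (0 : Q →ₗ[R] E) = 0 := rfl

theorem coindLift_comp {P : Type} [AddCommGroup P] [Module (TrivSqZeroExt R R) P] [Module R P]
    [IsScalarTower R (TrivSqZeroExt R R) P] (ψ : Q →ₗ[R] E) (H : P →ₗ[S] Q) :
    coindLift ψ ∘ₗ H = coindLift (ψ ∘ₗ H.restrictScalars R) := by
  ext p <;> simp [coindLift_apply]

theorem coindLift_fst_comp (H : Q →ₗ[S] Coind E) :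
    coindLift (Coind.fst R E ∘ₗ H.restrictScalars R) = H := by
  ext q
  · rfl
  · simp [coindLift_apply]

instance [Module.Injective R E] : Module.Injective S (Coind E) := by
  refine ⟨fun A B _ _ _ _ F hF g => ?_⟩
  let _ := Module.compHom A (TrivSqZeroExt.inlHom R R)
  let _ := Module.compHom B (TrivSqZeroExt.inlHom R R)
  have := compHom_inlHom_isScalarTower (R := R) A
  have := compHom_inlHom_isScalarTower (R := R) B
  obtain ⟨φ, hφ⟩ := Module.Injective.out (F.restrictScalars R) hF
    (Coind.fst R E ∘ₗ g.restrictScalars R)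
  have hφF : φ ∘ₗ F.restrictScalars R = Coind.fst R E ∘ₗ g.restrictScalars R := LinearMap.ext hφ
  have hlift : coindLift φ ∘ₗ F = g := by rw [coindLift_comp, hφF, coindLift_fst_comp]
  exact ⟨coindLift φ, LinearMap.congr_fun hlift⟩

end Coind

section InjectiveSqZero

variable {R : Type} [Ring R]

local notation "S" => TrivSqZeroExt R R
local notation "ε" => (TrivSqZeroExt.inr 1 : TrivSqZeroExt R R)

variable {A Q : Type} [AddCommGroup A] [Module (TrivSqZeroExt R R) A] [Module R A]
  [IsScalarTower R (TrivSqZeroExt R R) A] [AddCommGroup Q] [Module (TrivSqZeroExt R R) Q]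
  [Module R Q] [IsScalarTower R (TrivSqZeroExt R R) Q]

def LinearMap.ofCommuteEps (f : A →ₗ[R] Q) (hf : ∀ a, f (ε • a) = ε • f a) : A →ₗ[S] Q where
  toFun := f
  map_add' := f.map_add
  map_smul' s a := by
    rw [RingHom.id_apply, smul_eq_fst_smul_add_snd_smul (R := R) s a,
      smul_eq_fst_smul_add_snd_smul (R := R) s (f a), map_add, map_smul, map_smul, hf]

theorem injective_ker_epsSMul [Module.Injective S Q] :
    Module.Injective R (LinearMap.ker (epsSMul R Q)) := by
  refine ⟨fun X Y _ _ _ _ F hF g => ?_⟩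
  let _ := epsModule (0 : X →ₗ[R] X) (LinearMap.zero_comp 0)
  let _ := epsModule (0 : Y →ₗ[R] Y) (LinearMap.zero_comp 0)
  have := epsModule_isScalarTower (0 : X →ₗ[R] X) (LinearMap.zero_comp 0)
  have := epsModule_isScalarTower (0 : Y →ₗ[R] Y) (LinearMap.zero_comp 0)
  have hX (x : X) : ε • x = 0 := epsModule_eps_smul _ _ x
  have hY (y : Y) : ε • y = 0 := epsModule_eps_smul _ _ y
  obtain ⟨h, hh⟩ := Module.Injective.out (F.ofCommuteEps fun x => by rw [hX, hY, map_zero]) hF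
    ((Submodule.subtype _ ∘ₗ g).ofCommuteEps fun x => by
      rw [hX, map_zero, eq_comm]
      exact (g x).2)
  have hker (y : Y) : h y ∈ LinearMap.ker (epsSMul R Q) := by
    rw [LinearMap.mem_ker, epsSMul_apply, ← map_smul, hY, map_zero]
  exact ⟨(h.restrictScalars R).codRestrict _ hker, fun x => Subtype.ext (hh x)⟩

theorem range_epsSMul_eq_ker [Module.Injective S Q] :
    LinearMap.range (epsSMul R Q) = LinearMap.ker (epsSMul R Q) := by
  refine le_antisymm (LinearMap.range_le_ker_iff.mpr epsSMul_comp_epsSMul) fun q hq => ?_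
  obtain ⟨h, hh⟩ := Module.Injective.exists_comp_eq_of_ker_le (LinearMap.mulRight S ε)
    (LinearMap.toSpanSingleton S Q q) fun s hs => by
      have hs₁ : s.fst = 0 := by
        simpa [eps_mul_eq_inr_fst] using congrArg TrivSqZeroExt.snd (hs : s * ε = 0)
      rw [LinearMap.mem_ker, LinearMap.toSpanSingleton_apply,
        smul_eq_fst_smul_add_snd_smul (R := R), hs₁, zero_smul, zero_add,
        ← epsSMul_apply, LinearMap.mem_ker.mp hq, smul_zero]
  refine ⟨h 1, ?_⟩
  rw [epsSMul_apply, ← map_smul, smul_eq_mul, mul_one, ← one_mul ε]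
  exact (LinearMap.congr_fun hh 1).trans (one_smul S q)

end InjectiveSqZero

section CompleteResolution

variable {R : Type} [Ring R] {C : CochainComplex (ModuleCat.{0} R) ℤ}

theorem CochainComplex.d_d_apply (C : CochainComplex (ModuleCat.{0} R) ℤ) (i j k : ℤ)
    (x : C.X i) : (C.d j k).hom ((C.d i j).hom x) = 0 := by
  rw [← LinearMap.comp_apply, ← ModuleCat.hom_comp, C.d_comp_d]
  rfl

def AnticommutesWithD (σ : ∀ n, C.X n →ₗ[R] C.X (n + 1)) : Prop :=
  ∀ n, σ (n + 1) ∘ₗ (C.d n (n + 1)).hom = -((C.d (n + 1) (n + 1 + 1)).hom ∘ₗ σ n)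

namespace IsCompleteInjectiveResolution

theorem exact_succ (hC : IsCompleteInjectiveResolution R C) (m : ℤ) :
    Function.Exact (C.d m (m + 1)).hom (C.d (m + 1) (m + 1 + 1)).hom := by
  have h := hC.exact (m + 1)
  rwa [add_sub_cancel_right] at h

theorem exists_d_comp_eq (hC : IsCompleteInjectiveResolution R C) {Q : Type} [AddCommGroup Q]
    [Module R Q] [Module.Injective R Q] (m : ℤ) (g : Q →ₗ[R] C.X (m + 1))
    (hg : (C.d (m + 1) (m + 1 + 1)).hom ∘ₗ g = 0) :
    ∃ h : Q →ₗ[R] C.X m, (C.d m (m + 1)).hom ∘ₗ h = g := by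
  have h := hC.homExact (ModuleCat.of R Q) ‹_› (m + 1) g hg
  rwa [add_sub_cancel_right] at h

theorem of_succ (injective : ∀ n, Module.Injective R (C.X n))
    (exact : ∀ m : ℤ, Function.Exact (C.d m (m + 1)).hom (C.d (m + 1) (m + 1 + 1)).hom)
    (homExact : ∀ (Q : Type) [AddCommGroup Q] [Module R Q], Module.Injective R Q →
      ∀ (m : ℤ) (g : Q →ₗ[R] C.X (m + 1)), (C.d (m + 1) (m + 1 + 1)).hom ∘ₗ g = 0 →
        ∃ h : Q →ₗ[R] C.X m, (C.d m (m + 1)).hom ∘ₗ h = g) :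
    IsCompleteInjectiveResolution R C := by
  refine ⟨injective, fun n => ?_, fun Q hQ n g hg => ?_⟩
  · obtain ⟨m, rfl⟩ : ∃ m, n = m + 1 := ⟨n - 1, by ring⟩
    rw [add_sub_cancel_right]
    exact exact m
  · obtain ⟨m, rfl⟩ : ∃ m, n = m + 1 := ⟨n - 1, by ring⟩
    rw [add_sub_cancel_right]
    exact homExact Q hQ m g hg

theorem exists_anticommuting (hC : IsCompleteInjectiveResolution R C)
    (σ₀ : C.X 0 →ₗ[R] C.X (0 + 1))
    (hσ₀ : ∀ x, (C.d 0 (0 + 1)).hom x = 0 → (C.d (0 + 1) (0 + 1 + 1)).hom (σ₀ x) = 0) :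
    ∃ σ : ∀ n, C.X n →ₗ[R] C.X (n + 1), σ 0 = σ₀ ∧ AnticommutesWithD σ := by
  -- The invariant `d ∘ σⁿ = 0` on `ker dⁿ` makes `σⁿ⁺¹ := -d ∘ σⁿ ∘ d⁻¹` well defined going up,
  -- and makes `-σⁿ⁺¹ ∘ dⁿ` a cycle, hence a boundary, going down.
  refine Int.exists_seq_of_step (P := fun n => C.X n →ₗ[R] C.X (n + 1))
    (fun n s s' => s' ∘ₗ (C.d n (n + 1)).hom = -((C.d (n + 1) (n + 1 + 1)).hom ∘ₗ s))
    (fun n s => ∀ x, (C.d n (n + 1)).hom x = 0 → (C.d (n + 1) (n + 1 + 1)).hom (s x) = 0)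
    σ₀ hσ₀ (fun n s hs => ?_) (fun n s' hs' => ?_)
  · have := hC.injective (n + 1 + 1)
    obtain ⟨s', hs'⟩ := Module.Injective.exists_comp_eq_of_ker_le (C.d n (n + 1)).hom
      (-((C.d (n + 1) (n + 1 + 1)).hom ∘ₗ s)) fun x hx => by simp [hs x hx]
    refine ⟨s', hs', fun y hy => ?_⟩
    obtain ⟨x, rfl⟩ := (hC.exact_succ n y).mp hy
    rw [← LinearMap.comp_apply s', hs']
    simp [CochainComplex.d_d_apply]
  · have := hC.injective n
    obtain ⟨s, hs⟩ := hC.exists_d_comp_eq (n + 1) (-(s' ∘ₗ (C.d n (n + 1)).hom)) <| by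
      ext x
      simp [hs' _ (C.d_d_apply _ _ _ x)]
    refine ⟨s, by rw [hs, neg_neg], fun x hx => ?_⟩
    rw [← LinearMap.comp_apply, hs]
    simp [hx]

end IsCompleteInjectiveResolution

end CompleteResolution

section TwistedDiff

variable {R : Type} [Ring R] {C : CochainComplex (ModuleCat.{0} R) ℤ}
  (σ : ∀ n, C.X n →ₗ[R] C.X (n + 1)) {Q : Type} [AddCommGroup Q] [Module R Q]

/-- Under `coindLift`, this is composition with the differential of `twistedComplex`
(`twistedCoindD_comp_coindLift`). -/
def twistedDiff (ν : Q →ₗ[R] Q) (n : ℤ) : (Q →ₗ[R] C.X n) →+ (Q →ₗ[R] C.X (n + 1)) :=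
  AddMonoidHom.mk' (fun ψ => (C.d n (n + 1)).hom ∘ₗ ψ + σ n ∘ₗ ψ ∘ₗ ν) fun a b => by
    ext
    simp only [LinearMap.add_apply, LinearMap.comp_apply, map_add]
    abel

variable {σ}

theorem twistedDiff_apply (ν : Q →ₗ[R] Q) {n : ℤ} (ψ : Q →ₗ[R] C.X n) (q : Q) :
    twistedDiff σ ν n ψ q = (C.d n (n + 1)).hom (ψ q) + σ n (ψ (ν q)) := rfl

theorem twistedDiff_twistedDiff
    (hσ : AnticommutesWithD σ)
    {ν : Q →ₗ[R] Q} (hν : ν ∘ₗ ν = 0) {n : ℤ} (ψ : Q →ₗ[R] C.X n) :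
    twistedDiff σ ν (n + 1) (twistedDiff σ ν n ψ) = 0 := by
  ext q
  have hσq := LinearMap.congr_fun (hσ n) (ψ (ν q))
  have hνq : ν (ν q) = 0 := LinearMap.congr_fun hν q
  simp only [LinearMap.comp_apply, LinearMap.neg_apply] at hσq
  simp [twistedDiff_apply, CochainComplex.d_d_apply, hσq, hνq]

theorem twistedDiff_comp {P : Type} [AddCommGroup P] [Module R P] {ν : Q →ₗ[R] Q}
    {ν' : P →ₗ[R] P} (H : P →ₗ[R] Q) (hH : ν ∘ₗ H = H ∘ₗ ν') {n : ℤ} (ψ : Q →ₗ[R] C.X n) :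
    twistedDiff σ ν n ψ ∘ₗ H = twistedDiff σ ν' n (ψ ∘ₗ H) := by
  ext p
  have hHp := LinearMap.congr_fun hH p
  simp only [LinearMap.comp_apply] at hHp
  simp only [LinearMap.comp_apply, twistedDiff_apply, hHp]

theorem IsCompleteInjectiveResolution.exists_ker_le_ker_sub_twistedDiff
    (hC : IsCompleteInjectiveResolution R C) (ν : Q →ₗ[R] Q)
    [Module.Injective R (LinearMap.ker ν)] {m : ℤ} (ψ : Q →ₗ[R] C.X (m + 1))
    (hψ : twistedDiff σ ν (m + 1) ψ = 0) :
    ∃ φ : Q →ₗ[R] C.X m, LinearMap.ker ν ≤ LinearMap.ker (ψ - twistedDiff σ ν m φ) := by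
  have := hC.injective m
  obtain ⟨φ', hφ'⟩ := hC.exists_d_comp_eq m (ψ ∘ₗ (LinearMap.ker ν).subtype) <| by
    ext ⟨k, hk⟩
    simpa [twistedDiff_apply, LinearMap.mem_ker.mp hk] using LinearMap.congr_fun hψ k
  obtain ⟨φ, hφ⟩ := Module.Injective.out _ (LinearMap.ker ν).injective_subtype φ'
  refine ⟨φ, fun k hk => ?_⟩
  have hdφ' : (C.d m (m + 1)).hom (φ' ⟨k, hk⟩) = ψ k := LinearMap.congr_fun hφ' ⟨k, hk⟩
  have hφk : φ k = φ' ⟨k, hk⟩ := hφ ⟨k, hk⟩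
  simp [twistedDiff_apply, LinearMap.mem_ker.mp hk, hφk, hdφ']

theorem IsCompleteInjectiveResolution.exists_twistedDiff_eq_of_ker_le
    (hC : IsCompleteInjectiveResolution R C) (ν : Q →ₗ[R] Q) (hν : LinearMap.range ν = LinearMap.ker ν)
    [Module.Injective R (LinearMap.ker ν)] {m : ℤ} (ψ : Q →ₗ[R] C.X (m + 1))
    (hψ : twistedDiff σ ν (m + 1) ψ = 0) (hψν : LinearMap.ker ν ≤ LinearMap.ker ψ) :
    ∃ φ : Q →ₗ[R] C.X m, twistedDiff σ ν m φ = ψ := by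
  have hνK (q : Q) : ν q ∈ LinearMap.ker ν := hν ▸ LinearMap.mem_range_self ν q
  have := hC.injective (m + 1)
  let ν' : Q →ₗ[R] LinearMap.ker ν := ν.codRestrict _ hνK
  have hν' : Function.Surjective ν' := by
    rintro ⟨k, hk⟩
    obtain ⟨q, rfl⟩ : k ∈ LinearMap.range ν := hν ▸ hk
    exact ⟨q, rfl⟩
  obtain ⟨χ, hχ⟩ := Module.Injective.exists_comp_eq_of_ker_le ν' ψ fun q hq =>
    hψν (congrArg Subtype.val hq)
  obtain ⟨ω, hω⟩ := hC.exists_d_comp_eq m χ <| by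
    ext k
    obtain ⟨q, rfl⟩ := hν' k
    rw [LinearMap.comp_apply, ← LinearMap.comp_apply χ ν', hχ, LinearMap.zero_apply]
    simpa [twistedDiff_apply, LinearMap.mem_ker.mp (hψν (hνK q))] using LinearMap.congr_fun hψ q
  refine ⟨ω ∘ₗ ν', LinearMap.ext fun q => ?_⟩
  have hdω : (C.d m (m + 1)).hom (ω (ν' q)) = ψ q := by
    rw [← LinearMap.comp_apply _ ω, hω, ← LinearMap.comp_apply χ, hχ]
  have hν'ν : ν' (ν q) = 0 := Subtype.ext (LinearMap.mem_ker.mp (hνK q))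
  rw [twistedDiff_apply, LinearMap.comp_apply, LinearMap.comp_apply, hdω, hν'ν, map_zero, map_zero,
    add_zero]

/-- Exactness of `Hom_R(Q, C)` with the twisted differential: correct `ψ` by a boundary so that it
vanishes on `ker ν`, then it factors through `ν : Q ↠ ker ν`; both steps use
`Hom_R(ker ν, -)`-exactness of `C`. -/
theorem IsCompleteInjectiveResolution.exists_twistedDiff_eq
    (hC : IsCompleteInjectiveResolution R C) (hσ : AnticommutesWithD σ)
    (ν : Q →ₗ[R] Q) (hν : LinearMap.range ν = LinearMap.ker ν)
    [Module.Injective R (LinearMap.ker ν)] {m : ℤ} (ψ : Q →ₗ[R] C.X (m + 1))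
    (hψ : twistedDiff σ ν (m + 1) ψ = 0) : ∃ φ : Q →ₗ[R] C.X m, twistedDiff σ ν m φ = ψ := by
  have hνν : ν ∘ₗ ν = 0 := LinearMap.range_le_ker_iff.mp hν.le
  obtain ⟨φ₁, hφ₁⟩ := hC.exists_ker_le_ker_sub_twistedDiff ν ψ hψ
  obtain ⟨φ₂, hφ₂⟩ := hC.exists_twistedDiff_eq_of_ker_le ν hν (ψ - twistedDiff σ ν m φ₁)
    (by rw [map_sub, hψ, twistedDiff_twistedDiff hσ hνν, sub_zero]) hφ₁
  exact ⟨φ₁ + φ₂, by rw [map_add, hφ₂, add_sub_cancel]⟩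

end TwistedDiff

section TwistedComplex

variable {R : Type} [Ring R] {C : CochainComplex (ModuleCat.{0} R) ℤ}
  (σ : ∀ n, C.X n →ₗ[R] C.X (n + 1))

local notation "S" => TrivSqZeroExt R R
local notation "ε" => (TrivSqZeroExt.inr 1 : TrivSqZeroExt R R)

def twistedCoindD (n : ℤ) : Coind (C.X n) →ₗ[S] Coind (C.X (n + 1)) :=
  coindLift (twistedDiff σ (epsSMul R (Coind (C.X n))) n (Coind.fst R (C.X n)))

variable {σ}

theorem twistedCoindD_apply {n : ℤ} (x : Coind (C.X n)) :
    twistedCoindD σ n x =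
      Coind.mk ((C.d n (n + 1)).hom x.1 + σ n x.2) ((C.d n (n + 1)).hom x.2) := by
  ext <;> simp [twistedCoindD, coindLift_apply, twistedDiff_apply, epsSMul_apply]

theorem twistedCoindD_comp_coindLift {Q : Type} [AddCommGroup Q] [Module (TrivSqZeroExt R R) Q]
    [Module R Q] [IsScalarTower R (TrivSqZeroExt R R) Q] {n : ℤ} (ψ : Q →ₗ[R] C.X n) :
    twistedCoindD σ n ∘ₗ coindLift ψ = coindLift (twistedDiff σ (epsSMul R Q) n ψ) := by
  rw [twistedCoindD, coindLift_comp,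
    twistedDiff_comp _ (epsSMul_comp_restrictScalars (coindLift ψ)), fst_comp_coindLift]

variable (hσ : AnticommutesWithD σ)
include hσ

theorem twistedCoindD_comp_twistedCoindD (n : ℤ) :
    twistedCoindD σ (n + 1) ∘ₗ twistedCoindD σ n = 0 := by
  conv_lhs => arg 2; rw [twistedCoindD]
  rw [twistedCoindD_comp_coindLift, twistedDiff_twistedDiff hσ epsSMul_comp_epsSMul, coindLift_zero]

theorem exact_twistedCoindD (hC : IsCompleteInjectiveResolution R C) (m : ℤ) :
    Function.Exact (twistedCoindD σ m) (twistedCoindD σ (m + 1)) := by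
  refine fun y => ⟨fun hy => ?_, ?_⟩
  · rw [twistedCoindD_apply] at hy
    have hy₁ : (C.d (m + 1) (m + 1 + 1)).hom y.1 = -σ (m + 1) y.2 :=
      eq_neg_of_add_eq_zero_left (congrArg (·.1) hy)
    obtain ⟨w, hw⟩ := (hC.exact_succ m y.2).mp (congrArg (·.2) hy)
    have hσw : σ (m + 1) ((C.d m (m + 1)).hom w) = -(C.d (m + 1) (m + 1 + 1)).hom (σ m w) :=
      LinearMap.congr_fun (hσ m) w
    obtain ⟨a, ha⟩ := (hC.exact_succ m (y.1 - σ m w)).mp <| by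
      rw [map_sub, hy₁, ← hw, hσw, neg_neg, sub_self]
    refine ⟨Coind.mk a w, ?_⟩
    ext
    · simp [twistedCoindD_apply, ha]
    · simp [twistedCoindD_apply, hw]
  · rintro ⟨x, rfl⟩
    exact LinearMap.congr_fun (twistedCoindD_comp_twistedCoindD hσ m) x

theorem exists_twistedCoindD_comp_eq (hC : IsCompleteInjectiveResolution R C) {Q : Type}
    [AddCommGroup Q] [Module S Q] [Module.Injective S Q] {m : ℤ}
    (g : Q →ₗ[S] Coind (C.X (m + 1))) (hg : twistedCoindD σ (m + 1) ∘ₗ g = 0) :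
    ∃ h : Q →ₗ[S] Coind (C.X m), twistedCoindD σ m ∘ₗ h = g := by
  let _ := Module.compHom Q (TrivSqZeroExt.inlHom R R)
  have := compHom_inlHom_isScalarTower (R := R) Q
  have := injective_ker_epsSMul (R := R) (Q := Q)
  rw [← coindLift_fst_comp g, twistedCoindD_comp_coindLift] at hg
  have hψ := congrArg (Coind.fst R _ ∘ₗ ·.restrictScalars R) hg
  simp only [fst_comp_coindLift] at hψ
  obtain ⟨φ, hφ⟩ := hC.exists_twistedDiff_eq hσ (epsSMul R Q) range_epsSMul_eq_ker _ hψ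
  exact ⟨coindLift φ, by rw [twistedCoindD_comp_coindLift, hφ, coindLift_fst_comp]⟩

def twistedComplex : CochainComplex (ModuleCat.{0} S) ℤ :=
  CochainComplex.of (fun n => ModuleCat.of S (Coind (C.X n)))
    (fun n => ModuleCat.ofHom (twistedCoindD σ n))
    fun n => ModuleCat.hom_ext (twistedCoindD_comp_twistedCoindD hσ n)

theorem twistedComplex_d_hom (n : ℤ) :
    ((twistedComplex hσ).d n (n + 1)).hom = twistedCoindD σ n := by
  change ModuleCat.Hom.hom (CochainComplex.of.d (fun n => ModuleCat.of S (Coind (C.X n)))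
    (fun n => ModuleCat.ofHom (twistedCoindD σ n)) n (n + 1)) = _
  rw [CochainComplex.of_d]
  rfl

theorem isCompleteInjectiveResolution_twistedComplex (hC : IsCompleteInjectiveResolution R C) :
    IsCompleteInjectiveResolution S (twistedComplex hσ) := by
  refine .of_succ (fun n => ?_) (fun m => ?_) (fun Q _ _ _ m g hg => ?_)
  · have := hC.injective n
    exact (inferInstance : Module.Injective S (Coind (C.X n)))
  · rw [twistedComplex_d_hom, twistedComplex_d_hom]
    exact exact_twistedCoindD hσ hC m
  · rw [twistedComplex_d_hom] at hg ⊢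
    exact exists_twistedCoindD_comp_eq hσ hC g hg

end TwistedComplex

section KernelOfTwistedComplex

variable {R : Type} [Ring R]

local notation "S" => TrivSqZeroExt R R
local notation "ε" => (TrivSqZeroExt.inr 1 : TrivSqZeroExt R R)

theorem nonempty_linearEquiv_ker_twistedCoindD {Y : Type} [AddCommGroup Y] [Module R Y]
    {β : Y →ₗ[R] Y} (hβ : β ∘ₗ β = 0) (hex : LinearMap.range β = LinearMap.ker β)
    {C : CochainComplex (ModuleCat.{0} R) ℤ} {σ : ∀ n, C.X n →ₗ[R] C.X (n + 1)}
    (e : LinearMap.ker β ≃ₗ[R] LinearMap.ker (C.d 0 (0 + 1)).hom) {f : Y →ₗ[R] C.X 0}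
    (hfe : ∀ k : LinearMap.ker β, f k = e k)
    (hσ₀ : σ 0 ∘ₗ f ∘ₗ β = -((C.d 0 (0 + 1)).hom ∘ₗ f)) :
    letI := epsModule β hβ
    Nonempty (Y ≃ₗ[S] LinearMap.ker (twistedCoindD σ 0)) := by
  let _ := epsModule β hβ
  have := epsModule_isScalarTower β hβ
  have hβf (y : Y) : f (ε • y) = f (β y) := by rw [epsModule_eps_smul]
  have hδ : twistedDiff σ (epsSMul R Y) 0 f = 0 := by
    ext y
    have hσy : σ 0 (f (β y)) = -(C.d 0 (0 + 1)).hom (f y) := LinearMap.congr_fun hσ₀ y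
    rw [twistedDiff_apply, epsSMul_apply, hβf, hσy, add_neg_cancel, LinearMap.zero_apply]
  have hker (y : Y) : coindLift f y ∈ LinearMap.ker (twistedCoindD σ 0) := by
    rw [LinearMap.mem_ker, ← LinearMap.comp_apply, twistedCoindD_comp_coindLift, hδ, coindLift_zero,
      LinearMap.zero_apply]
  refine ⟨LinearEquiv.ofBijective ((coindLift f).codRestrict _ hker) ⟨?_, ?_⟩⟩
  · refine (injective_iff_map_eq_zero _).mpr fun y hy => ?_
    have h : coindLift f y = 0 := congrArg Subtype.val hy
    refine eq_zero_of_extends_of_eq_zero e hfe hβ (congrArg (·.1) h) ?_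
    rw [← hβf]
    exact congrArg (·.2) h
  · rintro ⟨x, hx⟩
    rw [LinearMap.mem_ker, twistedCoindD_apply] at hx
    obtain ⟨y, h₀, h₁⟩ := exists_eq_of_extends e hfe hex hσ₀ (congrArg (·.1) hx) (congrArg (·.2) hx)
    exact ⟨y, Subtype.ext (Coind.ext h₀ ((hβf y).trans h₁))⟩

end KernelOfTwistedComplex

/-- If `Y →β Y →β Y` is exact and `ker(β)` is Gorenstein injective over `R`, then
`[Y, β]` is a Gorenstein injective `R ⋉ R`-module. -/
theorem stmt_12 (R Y : Type) [Ring R] [AddCommGroup Y] [Module R Y]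
    (β : Y →ₗ[R] Y) (hβ : β ∘ₗ β = 0)
    (hex : LinearMap.range β = LinearMap.ker β)
    (hGI : IsGorensteinInjective R ↥(LinearMap.ker β)) :
    letI : Module (TrivSqZeroExt R R) Y := epsModule β hβ
    IsGorensteinInjective (TrivSqZeroExt R R) Y := by
  obtain ⟨C, hC, ⟨e⟩⟩ := hGI
  have := hC.injective 0
  have := hC.injective 1
  obtain ⟨f, hfe⟩ := Module.Injective.out (LinearMap.ker β).subtype
    (LinearMap.ker β).injective_subtype (Submodule.subtype _ ∘ₗ e.toLinearMap)
  obtain ⟨σ₀, hσ₀, hσ₀d⟩ := exists_sigma_zero_of_extends e hfe hβ hex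
    (C.d 1 (1 + 1)).hom (by rw [← ModuleCat.hom_comp, C.d_comp_d]; rfl)
  obtain ⟨σ, rfl, hσ⟩ := hC.exists_anticommuting σ₀ hσ₀d
  refine ⟨twistedComplex hσ, isCompleteInjectiveResolution_twistedComplex hσ hC, ?_⟩
  obtain ⟨φ⟩ := nonempty_linearEquiv_ker_twistedCoindD hβ hex e hfe hσ₀
  exact ⟨φ.trans (LinearEquiv.ofEq _ _ (by rw [← twistedComplex_d_hom hσ 0]; rfl))⟩
end

section
/- Let R be a ring and M an R-R-bimodule such that the right R-module M has finite flat dimension and the left R-module M has finite projective dimension. Then for every complete projective resolution Δ in R-Mod (an exact complex of projective left R-modules staying exact under Hom_R(−, Q) for all projective Q), and every module L in Add(M), the complex Hom_R(Δ, L) is exact; and for every complete projective resolution Ξ in R-Mod, the complex M ⊗_R Ξ is exact. In particular M is a generalized compatible R-R-bimodule. -/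
open TensorProduct

open TensorProduct

/-- `L` belongs to `Add(N)`: `L` is a direct summand of a direct sum of copies of `N`. -/
def MemAdd (S : Type) [CommRing S] (N : Type) [AddCommGroup N] [Module S N]
    (L : Type) [AddCommGroup L] [Module S L] : Prop :=
  ∃ (ι : Type) (i : L →ₗ[S] (ι →₀ N)) (p : (ι →₀ N) →ₗ[S] L), p ∘ₗ i = LinearMap.id

/-- `N` is a generalized compatible `S`-`T`-bimodule: (1) `N ⊗_T -` preserves exactness of
complete projective resolutions in `T`-Mod; (2) `Hom_S(-, L)` preserves exactness of complete
projective resolutions in `S`-Mod for every `L ∈ Add(N)`. -/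
def IsGenCompatible (S T : Type) [CommRing S] [CommRing T] (N : Type) [AddCommGroup N]
    [Module S N] [Module T N] : Prop :=
  (∀ Ξ : CochainComplex (ModuleCat.{0} T) ℤ, IsCompleteProjectiveResolution T Ξ →
    ∀ n : ℤ, Function.Exact
      ⇑(LinearMap.lTensor N ((Ξ.d (n-1) n).hom : Ξ.X (n-1) →ₗ[T] Ξ.X n))
      ⇑(LinearMap.lTensor N ((Ξ.d n (n+1)).hom : Ξ.X n →ₗ[T] Ξ.X (n+1)))) ∧
  (∀ Δ : CochainComplex (ModuleCat.{0} S) ℤ, IsCompleteProjectiveResolution S Δ →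
    ∀ (L : Type) [AddCommGroup L] [Module S L], MemAdd S N L →
      ∀ (n : ℤ) (g : Δ.X n →ₗ[S] L),
        g ∘ₗ ((Δ.d (n-1) n).hom : Δ.X (n-1) →ₗ[S] Δ.X n) = 0 →
          ∃ h : Δ.X (n+1) →ₗ[S] L, h ∘ₗ ((Δ.d n (n+1)).hom : Δ.X n →ₗ[S] Δ.X (n+1)) = g)

/-- `M` has finite projective dimension: it admits a finite-length projective resolution. -/
def HasFiniteProjectiveDimension (R : Type) [CommRing R] (M : Type) [AddCommGroup M]
    [Module R M] : Prop :=
  ∃ (n : ℕ) (P : ℕ → ModuleCat.{0} R) (d : ∀ i : ℕ, P (i+1) ⟶ P i)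
    (ε : P 0 ⟶ ModuleCat.of R M),
    (∀ i, Module.Projective R (P i)) ∧ Function.Surjective ε ∧
    Function.Exact ⇑(d 0) ⇑ε ∧ (∀ i, Function.Exact ⇑(d (i+1)) ⇑(d i)) ∧
    ∀ i, n ≤ i → Subsingleton (P i)

/-- `M` has finite flat dimension: it admits a finite-length flat resolution. -/
def HasFiniteFlatDimension (R : Type) [CommRing R] (M : Type) [AddCommGroup M]
    [Module R M] : Prop :=
  ∃ (n : ℕ) (P : ℕ → ModuleCat.{0} R) (d : ∀ i : ℕ, P (i+1) ⟶ P i)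
    (ε : P 0 ⟶ ModuleCat.of R M),
    (∀ i, Module.Flat R (P i)) ∧ Function.Surjective ε ∧
    Function.Exact ⇑(d 0) ⇑ε ∧ (∀ i, Function.Exact ⇑(d (i+1)) ⇑(d i)) ∧
    ∀ i, n ≤ i → Subsingleton (P i)

/-!
Both halves are dimension shifting along a finite resolution of `M`.  If `0 → K → P → N → 0` is
exact with `P` projective, a cocycle `Δⱼ → N` lifts to `Δⱼ → P`; its restriction to `Δᵢ` lands in
`K` and, by exactness of `Hom(Δ, K)` one degree lower, comes from some `Δⱼ → K`.  Correcting the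
lift by it gives a cocycle into the projective `P`, which extends over `Δₖ` because `Δ` is a
complete resolution.  Dually, if `P` is flat then `0 → K ⊗ Ξ → P ⊗ Ξ → N ⊗ Ξ → 0` is a short
exact sequence of complexes (the terms of `Ξ` are flat) with exact middle term, so the long exact
sequence moves exactness from `K ⊗ Ξ` to `N ⊗ Ξ`.  Modules of `Add(M)` are handled through
`M ⊗ R⁽ᴵ⁾ ≅ M⁽ᴵ⁾`, whose resolution is that of `M` tensored with the free module `R⁽ᴵ⁾`.
-/

section

variable {R : Type} [CommRing R]

theorem LinearMap.rTensor_lTensor_comm_apply {A B X Y : Type} [AddCommGroup A] [Module R A]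
    [AddCommGroup B] [Module R B] [AddCommGroup X] [Module R X] [AddCommGroup Y] [Module R Y]
    (f : A →ₗ[R] B) (g : X →ₗ[R] Y) (t : A ⊗[R] X) :
    f.rTensor Y (g.lTensor A t) = g.lTensor B (f.rTensor X t) := by
  rw [← LinearMap.comp_apply, ← LinearMap.comp_apply, LinearMap.rTensor_comp_lTensor,
    LinearMap.lTensor_comp_rTensor]

def HasResolutionOfLength (C : ModuleCat.{0} R → Prop) (m : ℕ) (N : Type) [AddCommGroup N]
    [Module R N] : Prop :=
  ∃ (P : ℕ → ModuleCat.{0} R) (d : ∀ i : ℕ, P (i+1) ⟶ P i) (ε : P 0 ⟶ ModuleCat.of R N),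
    (∀ i, C (P i)) ∧ Function.Surjective ε ∧
    Function.Exact ⇑(d 0) ⇑ε ∧ (∀ i, Function.Exact ⇑(d (i+1)) ⇑(d i)) ∧
    ∀ i, m ≤ i → Subsingleton (P i)

theorem HasResolutionOfLength.induction {C : ModuleCat.{0} R → Prop}
    {motive : (N : Type) → [AddCommGroup N] → [Module R N] → Prop}
    (subsingleton : ∀ (N : Type) [AddCommGroup N] [Module R N] [Subsingleton N], motive N)
    (of_ker : ∀ (P : ModuleCat.{0} R) (N : Type) [AddCommGroup N] [Module R N]
      (ε : P →ₗ[R] N), C P → Function.Surjective ε → motive (LinearMap.ker ε) → motive N)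
    {m : ℕ} {N : Type} [AddCommGroup N] [Module R N] (h : HasResolutionOfLength C m N) :
    motive N := by
  induction m generalizing N with
  | zero =>
    obtain ⟨P, -, ε, -, hε, -, -, hP⟩ := h
    have := hP 0 le_rfl
    have := hε.subsingleton
    exact subsingleton N
  | succ m ih =>
    obtain ⟨P, d, ε, hC, hε, hd₀, hd, hP⟩ := h
    refine of_ker (P 0) N ε.hom (hC 0) hε (ih ?_)
    have hd₀ε (x) : (d 0).hom x ∈ LinearMap.ker ε.hom := hd₀.apply_apply_eq_zero x
    refine ⟨fun i => P (i+1), fun i => d (i+1),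
      ModuleCat.ofHom ((d 0).hom.codRestrict _ hd₀ε), fun i => hC (i+1), ?_, ?_,
      fun i => hd (i+1), fun i hi => hP (i+1) (by omega)⟩
    · rintro ⟨y, hy⟩
      obtain ⟨x, rfl⟩ := (hd₀ y).mp hy
      exact ⟨x, rfl⟩
    · intro x
      simpa [Subtype.ext_iff] using hd 0 x

theorem HasResolutionOfLength.rTensor {C : ModuleCat.{0} R → Prop}
    (F : Type) [AddCommGroup F] [Module R F] [Module.Flat R F]
    (hC : ∀ P : ModuleCat.{0} R, C P → C (ModuleCat.of R (P ⊗[R] F)))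
    {m : ℕ} {N : Type} [AddCommGroup N] [Module R N] (h : HasResolutionOfLength C m N) :
    HasResolutionOfLength C m (N ⊗[R] F) := by
  obtain ⟨P, d, ε, hPC, hε, hd₀, hd, hP⟩ := h
  refine ⟨fun i => ModuleCat.of R (P i ⊗[R] F), fun i => ModuleCat.ofHom ((d i).hom.rTensor F),
    ModuleCat.ofHom (ε.hom.rTensor F), fun i => hC _ (hPC i), LinearMap.rTensor_surjective F hε,
    Module.Flat.rTensor_exact F hd₀, fun i => Module.Flat.rTensor_exact F (hd i),
    fun i hi => ?_⟩
  have := hP i hi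
  exact inferInstanceAs (Subsingleton (P i ⊗[R] F))

def HomExactInto (Δ : CochainComplex (ModuleCat.{0} R) ℤ) (L : Type) [AddCommGroup L]
    [Module R L] : Prop :=
  ∀ i j k : ℤ, i + 1 = j → j + 1 = k → ∀ g : Δ.X j →ₗ[R] L, g ∘ₗ (Δ.d i j).hom = 0 →
    ∃ h : Δ.X k →ₗ[R] L, h ∘ₗ (Δ.d j k).hom = g

def LTensorExact (N : Type) [AddCommGroup N] [Module R N]
    (Ξ : CochainComplex (ModuleCat.{0} R) ℤ) : Prop :=
  ∀ i j k : ℤ, i + 1 = j → j + 1 = k →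
    Function.Exact ⇑((Ξ.d i j).hom.lTensor N) ⇑((Ξ.d j k).hom.lTensor N)

namespace IsCompleteProjectiveResolution

variable {Δ : CochainComplex (ModuleCat.{0} R) ℤ} (hΔ : IsCompleteProjectiveResolution R Δ)
include hΔ

theorem exact_of_succ_eq {i j k : ℤ} (hij : i + 1 = j) (hjk : j + 1 = k) :
    Function.Exact ⇑(Δ.d i j).hom ⇑(Δ.d j k).hom := by
  obtain rfl : i = j - 1 := by omega
  subst hjk
  exact hΔ.exact j

theorem homExactInto_of_projective (Q : Type) [AddCommGroup Q] [Module R Q]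
    [Module.Projective R Q] : HomExactInto Δ Q := by
  rintro i j k hij hjk g hg
  obtain rfl : i = j - 1 := by omega
  subst hjk
  exact hΔ.homExact (ModuleCat.of R Q) ‹_› j (ModuleCat.ofHom g) hg

end IsCompleteProjectiveResolution

namespace HomExactInto

variable {Δ : CochainComplex (ModuleCat.{0} R) ℤ}

theorem of_subsingleton (L : Type) [AddCommGroup L] [Module R L] [Subsingleton L] :
    HomExactInto Δ L :=
  fun _ _ _ _ _ _ _ => ⟨0, Subsingleton.elim _ _⟩

theorem of_retract {L X : Type} [AddCommGroup L] [Module R L] [AddCommGroup X] [Module R X]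
    (i : L →ₗ[R] X) (p : X →ₗ[R] L) (hpi : p ∘ₗ i = LinearMap.id) (hX : HomExactInto Δ X) :
    HomExactInto Δ L := by
  intro a b c hab hbc g hg
  obtain ⟨h, hh⟩ := hX a b c hab hbc (i ∘ₗ g) (by
    rw [LinearMap.comp_assoc, hg, LinearMap.comp_zero])
  refine ⟨p ∘ₗ h, ?_⟩
  rw [LinearMap.comp_assoc, hh, ← LinearMap.comp_assoc, hpi, LinearMap.id_comp]

theorem of_ker (hΔ : IsCompleteProjectiveResolution R Δ) {P N : Type} [AddCommGroup P]
    [Module R P] [Module.Projective R P] [AddCommGroup N] [Module R N] (ε : P →ₗ[R] N)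
    (hε : Function.Surjective ε) (hK : HomExactInto Δ (LinearMap.ker ε)) :
    HomExactInto Δ N := by
  intro i j k hij hjk g hg
  have := hΔ.projective j
  obtain ⟨g', hg'⟩ := Module.projective_lifting_property ε g hε
  have hmem (x) : g' ((Δ.d i j).hom x) ∈ LinearMap.ker ε := by
    rw [LinearMap.mem_ker, ← LinearMap.comp_apply ε, hg', ← LinearMap.comp_apply, hg,
      LinearMap.zero_apply]
  obtain ⟨h', hh'⟩ := hK (i - 1) i j (sub_add_cancel i 1) hij
    ((g' ∘ₗ (Δ.d i j).hom).codRestrict _ hmem) (by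
      ext x
      have hdd := (hΔ.exact_of_succ_eq (sub_add_cancel i 1) hij).apply_apply_eq_zero x
      simpa using congrArg g' hdd)
  obtain ⟨h, hh⟩ := hΔ.homExactInto_of_projective P i j k hij hjk
    (g' - (LinearMap.ker ε).subtype ∘ₗ h') (by
      rw [LinearMap.sub_comp, LinearMap.comp_assoc, hh', LinearMap.subtype_comp_codRestrict,
        sub_self])
  refine ⟨ε ∘ₗ h, ?_⟩
  rw [LinearMap.comp_assoc, hh, LinearMap.comp_sub, hg', ← LinearMap.comp_assoc,
    (LinearMap.exact_subtype_ker_map ε).linearMap_comp_eq_zero, LinearMap.zero_comp, sub_zero]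

end HomExactInto

theorem HasResolutionOfLength.homExactInto {Δ : CochainComplex (ModuleCat.{0} R) ℤ}
    (hΔ : IsCompleteProjectiveResolution R Δ) {m : ℕ} {N : Type} [AddCommGroup N] [Module R N]
    (h : HasResolutionOfLength (fun P : ModuleCat.{0} R => Module.Projective R P) m N) :
    HomExactInto Δ N :=
  h.induction (motive := fun N _ _ => HomExactInto Δ N) HomExactInto.of_subsingleton
    fun P _ _ _ ε (_ : Module.Projective R P) hε hK => HomExactInto.of_ker hΔ ε hε hK

namespace LTensorExact

variable {Ξ : CochainComplex (ModuleCat.{0} R) ℤ}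

theorem of_subsingleton (N : Type) [AddCommGroup N] [Module R N] [Subsingleton N] :
    LTensorExact N Ξ :=
  fun _ _ _ _ _ _ => ⟨fun _ => ⟨0, Subsingleton.elim _ _⟩, fun _ => Subsingleton.elim _ _⟩

theorem of_ker (hΞ : IsCompleteProjectiveResolution R Ξ) {P N : Type} [AddCommGroup P]
    [Module R P] [Module.Flat R P] [AddCommGroup N] [Module R N] (ε : P →ₗ[R] N)
    (hε : Function.Surjective ε) (hK : LTensorExact (LinearMap.ker ε) Ξ) :
    LTensorExact N Ξ := by
  intro i j k hij hjk
  have := hΞ.projective (k + 1)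
  have hεK := LinearMap.exact_subtype_ker_map ε
  have hdd := (hΞ.exact_of_succ_eq hij hjk).linearMap_comp_eq_zero
  have hdd' := (hΞ.exact_of_succ_eq hjk rfl).linearMap_comp_eq_zero
  intro y
  constructor
  · intro hy
    obtain ⟨w, rfl⟩ := LinearMap.rTensor_surjective (Ξ.X j) hε y
    rw [← LinearMap.rTensor_lTensor_comm_apply] at hy
    obtain ⟨z, hz⟩ := (rTensor_exact (Ξ.X k) hεK hε _).mp hy
    have hz₀ : (Ξ.d k (k + 1)).hom.lTensor _ z = 0 := by
      apply Module.Flat.rTensor_preserves_injective_linearMap (M := Ξ.X (k + 1)) _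
        (LinearMap.ker ε).injective_subtype
      rw [map_zero, LinearMap.rTensor_lTensor_comm_apply, hz, ← LinearMap.comp_apply,
        ← LinearMap.lTensor_comp, hdd', LinearMap.lTensor_zero, LinearMap.zero_apply]
    obtain ⟨v, hv⟩ := (hK j k (k + 1) hjk rfl z).mp hz₀
    obtain ⟨t, ht⟩ := (Module.Flat.lTensor_exact P (hΞ.exact_of_succ_eq hij hjk)
      (w - (LinearMap.ker ε).subtype.rTensor _ v)).mp (by
        rw [map_sub, ← LinearMap.rTensor_lTensor_comm_apply, hv, hz, sub_self])
    refine ⟨ε.rTensor _ t, ?_⟩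
    rw [← LinearMap.rTensor_lTensor_comm_apply, ht, map_sub,
      ← LinearMap.comp_apply (ε.rTensor _), ← LinearMap.rTensor_comp, hεK.linearMap_comp_eq_zero,
      LinearMap.rTensor_zero, LinearMap.zero_apply, sub_zero]
  · rintro ⟨x, rfl⟩
    rw [← LinearMap.comp_apply, ← LinearMap.lTensor_comp, hdd, LinearMap.lTensor_zero,
      LinearMap.zero_apply]

end LTensorExact

theorem HasResolutionOfLength.lTensorExact {Ξ : CochainComplex (ModuleCat.{0} R) ℤ}
    (hΞ : IsCompleteProjectiveResolution R Ξ) {m : ℕ} {N : Type} [AddCommGroup N] [Module R N]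
    (h : HasResolutionOfLength (fun P : ModuleCat.{0} R => Module.Flat R P) m N) :
    LTensorExact N Ξ :=
  h.induction (motive := fun N _ _ => LTensorExact N Ξ) LTensorExact.of_subsingleton
    fun P _ _ _ ε (_ : Module.Flat R P) hε hK => LTensorExact.of_ker hΞ ε hε hK

theorem homExactInto_of_memAdd {Δ : CochainComplex (ModuleCat.{0} R) ℤ}
    (hΔ : IsCompleteProjectiveResolution R Δ) {m : ℕ} {M : Type} [AddCommGroup M] [Module R M]
    (hM : HasResolutionOfLength (fun P : ModuleCat.{0} R => Module.Projective R P) m M)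
    {L : Type} [AddCommGroup L] [Module R L] (hL : MemAdd R M L) : HomExactInto Δ L := by
  classical
  obtain ⟨ι, i, p, hpi⟩ := hL
  let e := TensorProduct.finsuppScalarRight R R M ι
  refine HomExactInto.of_retract (e.symm.toLinearMap ∘ₗ i) (p ∘ₗ e.toLinearMap) ?_
    ((hM.rTensor (ι →₀ R) fun P (_ : Module.Projective R P) => inferInstance).homExactInto hΔ)
  ext x
  simp [← LinearMap.comp_apply p i, hpi]

end

/-- If `M` has finite flat dimension (as a right `R`-module) and finite projective dimension
(as a left `R`-module), then `Hom_R(-, L)` preserves exactness of complete projective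
resolutions for every `L ∈ Add(M)`, and `M ⊗_R -` preserves exactness of complete projective
resolutions; in particular `M` is a generalized compatible `R`-`R`-bimodule. -/
theorem stmt_16 (R M : Type) [CommRing R] [AddCommGroup M] [Module R M]
    (hflat : HasFiniteFlatDimension R M) (hproj : HasFiniteProjectiveDimension R M) :
    (∀ Δ : CochainComplex (ModuleCat.{0} R) ℤ, IsCompleteProjectiveResolution R Δ →
      ∀ (L : Type) [AddCommGroup L] [Module R L], MemAdd R M L →
        ∀ (n : ℤ) (g : Δ.X n →ₗ[R] L),
          g ∘ₗ ((Δ.d (n-1) n).hom : Δ.X (n-1) →ₗ[R] Δ.X n) = 0 →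
            ∃ h : Δ.X (n+1) →ₗ[R] L,
              h ∘ₗ ((Δ.d n (n+1)).hom : Δ.X n →ₗ[R] Δ.X (n+1)) = g) ∧
    (∀ Ξ : CochainComplex (ModuleCat.{0} R) ℤ, IsCompleteProjectiveResolution R Ξ →
      ∀ n : ℤ, Function.Exact
        ⇑(LinearMap.lTensor M ((Ξ.d (n-1) n).hom : Ξ.X (n-1) →ₗ[R] Ξ.X n))
        ⇑(LinearMap.lTensor M ((Ξ.d n (n+1)).hom : Ξ.X n →ₗ[R] Ξ.X (n+1)))) ∧
    IsGenCompatible R R M := by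
  obtain ⟨_, hproj⟩ :
      ∃ m, HasResolutionOfLength (fun P : ModuleCat.{0} R => Module.Projective R P) m M := hproj
  obtain ⟨_, hflat⟩ :
      ∃ m, HasResolutionOfLength (fun P : ModuleCat.{0} R => Module.Flat R P) m M := hflat
  have hom (Δ) (hΔ : IsCompleteProjectiveResolution R Δ) (L : Type) [AddCommGroup L]
      [Module R L] (hL : MemAdd R M L) (n : ℤ) :=
    homExactInto_of_memAdd hΔ hproj hL (n - 1) n (n + 1) (sub_add_cancel n 1) rfl
  have tensor (Ξ) (hΞ : IsCompleteProjectiveResolution R Ξ) (n : ℤ) :=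
    hflat.lTensorExact hΞ (n - 1) n (n + 1) (sub_add_cancel n 1) rfl
  exact ⟨hom, tensor, tensor, hom⟩
end
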